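/- arXiv:1902.06677 — 4 statements merged into one kernel-verified Lean document; each statement's English description precedes it below -/
import Mathlib

section
/- Let a ≠ 0 be real, and for x, x' > 0 and y ∈ (0, π) set z = x² + x'² − 2·x·x'·cos y. If φ : ℝ→ℝ is twice differentiable on (0,∞) and ψ(y,x) = φ(z), then x²·∂²ψ/∂x² + x·∂ψ/∂x − a²·x²·ψ + ∂²ψ/∂y² = 4x²·( z·φ''(z) + φ'(z) − (a²/4)·φ(z) ). -/
/-! With `z = (x - x' cos y)² + (x' sin y)²`, the chain rule gives
`∂ₓψ = φ'(z)(2x - 2x' cos y)`, `∂ₓ²ψ = φ''(z)(2x - 2x' cos y)² + 2φ'(z)` and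
`∂_y²ψ = φ''(z)(2xx' sin y)² + φ'(z)(2xx' cos y)`. In the combination the `cos y` terms of
`x ∂ₓψ` and `∂_y²ψ` cancel, and the `φ''` terms add up to `4x²z φ''(z)` by `sin² + cos² = 1`. -/

open Real Set Filter Topology

theorem deriv_deriv_comp_eq {φ φ' φ'' g g' : ℝ → ℝ} {s : Set ℝ} {p g'' : ℝ}
    (hφ : ∀ z ∈ s, HasDerivAt φ (φ' z) z) (hφ' : ∀ z ∈ s, HasDerivAt φ' (φ'' z) z)
    (hg : ∀ᶠ t in 𝓝 p, HasDerivAt g (g' t) t ∧ g t ∈ s) (hg' : HasDerivAt g' g'' p) :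
    deriv (deriv fun t => φ (g t)) p = φ'' (g p) * g' p ^ 2 + φ' (g p) * g'' := by
  have hderiv : deriv (fun t => φ (g t)) =ᶠ[𝓝 p] fun t => φ' (g t) * g' t :=
    hg.mono fun t ⟨hgt, hst⟩ => ((hφ _ hst).comp t hgt).deriv
  obtain ⟨hgp, hsp⟩ := hg.self_of_nhds
  rw [hderiv.deriv_eq]
  exact (((hφ' _ hsp).comp p hgp).mul hg').deriv.trans (by rw [Function.comp_apply]; ring)

theorem lawOfCosines_pos {r θ : ℝ} (hr : r ≠ 0) (hθ : sin θ ≠ 0) (t : ℝ) :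
    0 < t ^ 2 + r ^ 2 - 2 * t * r * cos θ := by
  have hsq : t ^ 2 + r ^ 2 - 2 * t * r * cos θ = (t - r * cos θ) ^ 2 + (r * sin θ) ^ 2 := by
    linear_combination r ^ 2 * (sin_sq_add_cos_sq θ).symm
  rw [hsq]
  have := sq_pos_of_ne_zero (mul_ne_zero hr hθ)
  positivity

theorem hasDerivAt_lawOfCosines_side (r θ t : ℝ) :
    HasDerivAt (fun t => t ^ 2 + r ^ 2 - 2 * t * r * cos θ) (2 * t - 2 * r * cos θ) t :=
  (((hasDerivAt_pow 2 t).add_const _).sub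
    ((((hasDerivAt_id' t).const_mul 2).mul_const r).mul_const (cos θ))).congr_deriv (by ring)

theorem hasDerivAt_lawOfCosines_angle (t r θ : ℝ) :
    HasDerivAt (fun θ => t ^ 2 + r ^ 2 - 2 * t * r * cos θ) (2 * t * r * sin θ) θ :=
  (((hasDerivAt_cos θ).const_mul (2 * t * r)).const_sub (t ^ 2 + r ^ 2)).congr_deriv (by ring)

theorem stmt_0_general (a x' : ℝ) (hx' : 0 < x')
    (φ φ' φ'' : ℝ → ℝ)
    (hφ : ∀ z ∈ Ioi (0:ℝ), HasDerivAt φ (φ' z) z)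
    (hφ' : ∀ z ∈ Ioi (0:ℝ), HasDerivAt φ' (φ'' z) z)
    (x y : ℝ) (hy : y ∈ Ioo 0 π) :
    let ψ : ℝ → ℝ → ℝ := fun y x => φ (x ^ 2 + x' ^ 2 - 2 * x * x' * Real.cos y)
    let z : ℝ := x ^ 2 + x' ^ 2 - 2 * x * x' * Real.cos y
    x ^ 2 * deriv (deriv (fun x => ψ y x)) x + x * deriv (fun x => ψ y x) x
      - a ^ 2 * x ^ 2 * ψ y x + deriv (deriv (fun y => ψ y x)) y
      = 4 * x ^ 2 * (z * φ'' z + φ' z - (a ^ 2 / 4) * φ z) := by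
  intro ψ z
  have hz : ∀ θ ∈ Ioo 0 π, ∀ t, 0 < t ^ 2 + x' ^ 2 - 2 * t * x' * cos θ := fun θ hθ =>
    lawOfCosines_pos hx'.ne' (sin_pos_of_pos_of_lt_pi hθ.1 hθ.2).ne'
  have hx : deriv (fun t => ψ y t) x = φ' z * (2 * x - 2 * x' * cos y) :=
    ((hφ _ (hz y hy x)).comp x (hasDerivAt_lawOfCosines_side x' y x)).deriv
  have hxx : deriv (deriv fun t => ψ y t) x = φ'' z * (2 * x - 2 * x' * cos y) ^ 2 + φ' z * 2 :=
    deriv_deriv_comp_eq hφ hφ'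
      (.of_forall fun t => ⟨hasDerivAt_lawOfCosines_side x' y t, hz y hy t⟩)
      ((((hasDerivAt_id x).const_mul 2).sub_const _).congr_deriv (by simp))
  have hyy : deriv (deriv fun θ => ψ θ x) y
      = φ'' z * (2 * x * x' * sin y) ^ 2 + φ' z * (2 * x * x' * cos y) :=
    deriv_deriv_comp_eq hφ hφ'
      (eventually_of_mem (Ioo_mem_nhds hy.1 hy.2) fun θ hθ =>
        ⟨hasDerivAt_lawOfCosines_angle x x' θ, hz θ hθ x⟩)
      ((hasDerivAt_sin y).const_mul _)
  rw [hxx, hx, hyy]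
  linear_combination 4 * x ^ 2 * x' ^ 2 * φ'' z * sin_sq_add_cos_sq y

theorem stmt_0 (a x' : ℝ) (ha : a ≠ 0) (hx' : 0 < x')
    (φ φ' φ'' : ℝ → ℝ)
    (hφ : ∀ z ∈ Ioi (0:ℝ), HasDerivAt φ (φ' z) z)
    (hφ' : ∀ z ∈ Ioi (0:ℝ), HasDerivAt φ' (φ'' z) z)
    (x y : ℝ) (hx : 0 < x) (hy : y ∈ Ioo 0 π) :
    let ψ : ℝ → ℝ → ℝ := fun y x => φ (x ^ 2 + x' ^ 2 - 2 * x * x' * Real.cos y)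
    let z : ℝ := x ^ 2 + x' ^ 2 - 2 * x * x' * Real.cos y
    x ^ 2 * deriv (deriv (fun x => ψ y x)) x + x * deriv (fun x => ψ y x) x
      - a ^ 2 * x ^ 2 * ψ y x + deriv (deriv (fun y => ψ y x)) y
      = 4 * x ^ 2 * (z * φ'' z + φ' z - (a ^ 2 / 4) * φ z) :=
  stmt_0_general a x' hx' φ φ' φ'' hφ hφ' x y hy
end

section
/- Define K_0(z) = ∫_0^∞ e^{−z·cosh t} dt for z > 0, and let φ(z) = K_0(√z) for z > 0. Then φ satisfies the Lommel-type equation z·φ''(z) + φ'(z) − (1/4)·φ(z) = 0 for all z > 0. -/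
open Real Set MeasureTheory

/-- The modified Bessel function of the second kind of order 0. -/
noncomputable def besselK0 (z : ℝ) : ℝ :=
  ∫ t in Ioi (0:ℝ), Real.exp (-z * Real.cosh t)

/-!
Differentiating under the integral sign gives `K₀' = -∫ cosh t e^{-s cosh t} dt` and
`K₀'' = ∫ cosh² t e^{-s cosh t} dt`, and integrating `d/dt (sinh t e^{-s cosh t})` over `(0, ∞)`
gives `∫ cosh t e^{-s cosh t} dt = s ∫ sinh² t e^{-s cosh t} dt`; with `sinh² = cosh² - 1` this
is Bessel's equation `s² K₀'' + s K₀' - s² K₀ = 0`. Under `z = s²` one has `z ∂_z = (s/2) ∂_s`,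
so `z φ'' + φ' = (K₀'' + K₀'/s)/4 = K₀/4`.
-/

open Filter Topology

noncomputable def coshPowExpIntegral (n : ℕ) (s : ℝ) : ℝ :=
  ∫ t in Ioi (0:ℝ), cosh t ^ n * exp (-s * cosh t)

lemma besselK0_eq_coshPowExpIntegral_zero : besselK0 = coshPowExpIntegral 0 := by
  ext s
  simp [besselK0, coshPowExpIntegral]

lemma self_le_cosh_of_nonneg {t : ℝ} (ht : 0 ≤ t) : t ≤ cosh t :=
  (self_le_sinh_iff.2 ht).trans (sinh_lt_cosh t).le

lemma abs_sinh_le_cosh (t : ℝ) : |sinh t| ≤ cosh t :=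
  abs_le.2 ⟨by linarith [cosh_add_sinh t, exp_pos t], (sinh_lt_cosh t).le⟩

lemma cosh_pow_mul_exp_le {a : ℝ} (ha : 0 < a) (n : ℕ) {t : ℝ} (ht : 0 ≤ t) :
    cosh t ^ n * exp (-a * cosh t) ≤ n.factorial * (2 / a) ^ n * exp (-(a / 2) * t) := by
  have hpow : cosh t ^ n ≤ n.factorial * (2 / a) ^ n * exp (a / 2 * cosh t) := by
    have h := pow_div_factorial_le_exp (x := a / 2 * cosh t) (by positivity) n
    rw [div_le_iff₀ (by positivity), mul_pow] at h
    calc cosh t ^ n = (2 / a) ^ n * ((a / 2) ^ n * cosh t ^ n) := by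
          rw [← mul_assoc, ← mul_pow, show 2 / a * (a / 2) = 1 by field_simp, one_pow, one_mul]
      _ ≤ (2 / a) ^ n * (exp (a / 2 * cosh t) * n.factorial) := by gcongr
      _ = n.factorial * (2 / a) ^ n * exp (a / 2 * cosh t) := by ring
  calc cosh t ^ n * exp (-a * cosh t)
      ≤ n.factorial * (2 / a) ^ n * exp (a / 2 * cosh t) * exp (-a * cosh t) := by gcongr
    _ = n.factorial * (2 / a) ^ n * exp (-(a / 2) * cosh t) := by
        rw [mul_assoc, ← exp_add]
        ring_nf
    _ ≤ n.factorial * (2 / a) ^ n * exp (-(a / 2) * t) := by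
        gcongr _ * ?_
        exact exp_le_exp.2 (by nlinarith [self_le_cosh_of_nonneg ht])

lemma integrableOn_cosh_pow_mul_exp {a : ℝ} (ha : 0 < a) (n : ℕ) :
    IntegrableOn (fun t => cosh t ^ n * exp (-a * cosh t)) (Ioi 0) := by
  refine Integrable.mono' ((exp_neg_integrableOn_Ioi 0 (half_pos ha)).const_mul
    (n.factorial * (2 / a) ^ n)) (by fun_prop) ?_
  filter_upwards [ae_restrict_mem measurableSet_Ioi] with t ht
  rw [norm_of_nonneg (by positivity)]
  exact cosh_pow_mul_exp_le ha n (le_of_lt ht)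

lemma hasDerivAt_coshPowExpIntegral (n : ℕ) {s : ℝ} (hs : 0 < s) :
    HasDerivAt (coshPowExpIntegral n) (-coshPowExpIntegral (n + 1) s) s := by
  have key := hasDerivAt_integral_of_dominated_loc_of_deriv_le
    (μ := volume.restrict (Ioi 0)) (x₀ := s)
    (F := fun x t => cosh t ^ n * exp (-x * cosh t))
    (F' := fun x t => -(cosh t ^ (n + 1) * exp (-x * cosh t)))
    (bound := fun t => cosh t ^ (n + 1) * exp (-(s / 2) * cosh t))
    (Metric.ball_mem_nhds s (half_pos hs)) (.of_forall fun _ => by fun_prop)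
    (integrableOn_cosh_pow_mul_exp hs n) (by fun_prop) ?_
    (integrableOn_cosh_pow_mul_exp (half_pos hs) (n + 1)) ?_
  · rw [coshPowExpIntegral, ← integral_neg]
    exact key.2
  · refine .of_forall fun t x hx => ?_
    have hx : s / 2 < x := by
      linarith [(abs_lt.1 (mem_ball_iff_norm.1 hx)).1]
    rw [norm_neg, norm_of_nonneg (by positivity)]
    gcongr _ * ?_
    exact exp_le_exp.2 (by nlinarith [cosh_pos t])
  · refine .of_forall fun t x _ => ?_
    exact (((hasDerivAt_neg' x).mul_const (cosh t)).exp.const_mul (cosh t ^ n)).congr_deriv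
      (by ring)

lemma coshPowExpIntegral_one {s : ℝ} (hs : 0 < s) :
    coshPowExpIntegral 1 s = s * (coshPowExpIntegral 2 s - coshPowExpIntegral 0 s) := by
  set f : ℝ → ℝ := fun t => sinh t * exp (-s * cosh t)
  set g : ℕ → ℝ → ℝ := fun n t => cosh t ^ n * exp (-s * cosh t)
  have hg : ∀ n, IntegrableOn (g n) (Ioi 0) := integrableOn_cosh_pow_mul_exp hs
  have hf' : ∀ t, HasDerivAt f (g 1 t - s * (g 2 t - g 0 t)) t := fun t =>
    ((hasDerivAt_sinh t).mul ((hasDerivAt_cosh t).const_mul (-s)).exp).congr_deriv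
      (by simp only [g]; linear_combination (-s * exp (-s * cosh t)) * sinh_sq t)
  have hf'_int : IntegrableOn (fun t => g 1 t - s * (g 2 t - g 0 t)) (Ioi 0) :=
    (hg 1).sub (((hg 2).sub (hg 0)).const_mul s)
  have hf_int : IntegrableOn f (Ioi 0) := by
    refine (hg 1).mono' (by fun_prop) (.of_forall fun t => ?_)
    rw [norm_mul, norm_of_nonneg (exp_pos _).le, Real.norm_eq_abs]
    simpa [g] using mul_le_mul_of_nonneg_right (abs_sinh_le_cosh t) (exp_pos (-s * cosh t)).le
  have hf_lim : Tendsto f atTop (𝓝 0) :=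
    tendsto_zero_of_hasDerivAt_of_integrableOn_Ioi (fun t _ => hf' t) hf'_int hf_int
  have h := integral_Ioi_of_hasDerivAt_of_tendsto' (fun t _ => hf' t) hf'_int hf_lim
  have h_split : ∫ t in Ioi 0, (g 1 t - s * (g 2 t - g 0 t))
      = coshPowExpIntegral 1 s - s * (coshPowExpIntegral 2 s - coshPowExpIntegral 0 s) := by
    rw [integral_sub (f := g 1) (g := fun t => s * (g 2 t - g 0 t)) (hg 1)
      (((hg 2).sub (hg 0)).const_mul s), integral_const_mul, integral_sub (hg 2) (hg 0)]
    rfl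
  simp only [f, sinh_zero, zero_mul, sub_zero, h_split] at h
  linarith

lemma mul_deriv_deriv_comp_sqrt_add_deriv_comp_sqrt {f f' f'' : ℝ → ℝ}
    (hf : ∀ s > 0, HasDerivAt f (f' s) s) (hf' : ∀ s > 0, HasDerivAt f' (f'' s) s)
    {z : ℝ} (hz : 0 < z) :
    z * deriv (deriv fun w => f √w) z + deriv (fun w => f √w) z
      = (f'' √z + f' √z / √z) / 4 := by
  have hd : ∀ w > 0, HasDerivAt (fun w => f √w) (f' √w / (2 * √w)) w := fun w hw =>
    ((hf _ (sqrt_pos.2 hw)).comp w (hasDerivAt_sqrt hw.ne')).congr_deriv (by ring)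
  have hev : deriv (fun w => f √w) =ᶠ[𝓝 z] fun w => f' √w / (2 * √w) := by
    filter_upwards [Ioi_mem_nhds hz] with w hw
    exact (hd w hw).deriv
  have hs : 0 < √z := sqrt_pos.2 hz
  have hd2 : HasDerivAt (fun w => f' √w / (2 * √w)) _ z :=
    ((hf' _ hs).comp z (hasDerivAt_sqrt hz.ne')).div
      ((hasDerivAt_sqrt hz.ne').const_mul 2) (by positivity)
  rw [hev.deriv_eq, hd2.deriv, (hd z hz).deriv, Function.comp_apply]
  field_simp
  rw [sq_sqrt hz.le]
  ring

theorem stmt_2 :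
    let φ : ℝ → ℝ := fun z => besselK0 (Real.sqrt z)
    ∀ z > (0:ℝ), z * deriv (deriv φ) z + deriv φ z - (1/4) * φ z = 0 := by
  intro φ z hz
  have hK : ∀ s > 0, HasDerivAt besselK0 (-coshPowExpIntegral 1 s) s := fun _ hs =>
    besselK0_eq_coshPowExpIntegral_zero ▸ hasDerivAt_coshPowExpIntegral 0 hs
  have hK' : ∀ s > 0, HasDerivAt (fun s => -coshPowExpIntegral 1 s) (coshPowExpIntegral 2 s) s :=
    fun _ hs => (hasDerivAt_coshPowExpIntegral 1 hs).neg.congr_deriv (neg_neg _)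
  have hs : 0 < √z := sqrt_pos.2 hz
  rw [mul_deriv_deriv_comp_sqrt_add_deriv_comp_sqrt hK hK' hz, coshPowExpIntegral_one hs]
  simp only [φ, besselK0_eq_coshPowExpIntegral_zero]
  field_simp
  ring
end

section
/- For real numbers r > 0, c < cosh r, and n ≥ 1 a natural number, ∫_r^∞ (cosh ρ − c)^{−(n+2)/2}·(cosh ρ − cosh r)^{−1/2}·sinh ρ dρ = (cosh r − c)^{−(n+1)/2}·B(1/2, (n+1)/2). -/
/-!
Substituting `σ = cosh ρ` turns the integral into
`∫_{cosh r}^∞ (σ - c)^{-(p+q)} (σ - cosh r)^{p-1} dσ` with `p = 1/2`, `q = (n+1)/2`.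
With `d = cosh r - c`, the Möbius substitution `x = (σ - cosh r)/(σ - c)` maps `(cosh r, ∞)` onto
`(0, 1)`, with `1 - x = d/(σ - c)` and `dx = d/(σ - c)² dσ`, and turns this into `d^{-q}` times the
Beta integral `∫_0^1 x^{p-1} (1 - x)^{q-1} dx`.
-/

open Real Set MeasureTheory

/-- The Euler Beta function. -/
noncomputable def betaFn (x y : ℝ) : ℝ := Real.Gamma x * Real.Gamma y / Real.Gamma (x + y)

theorem integral_Ioo_rpow_mul_one_sub_rpow {p q : ℝ} (hp : 0 < p) (hq : 0 < q) :
    ∫ x in Ioo (0:ℝ) 1, x ^ (p - 1) * (1 - x) ^ (q - 1) = betaFn p q := by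
  have hB : Complex.betaIntegral p q
      = ((∫ x in Ioo (0:ℝ) 1, x ^ (p - 1) * (1 - x) ^ (q - 1) : ℝ) : ℂ) := by
    rw [Complex.betaIntegral, intervalIntegral.integral_of_le zero_le_one,
      integral_Ioc_eq_integral_Ioo, ← integral_complex_ofReal]
    refine setIntegral_congr_fun measurableSet_Ioo fun x ⟨hx0, hx1⟩ => ?_
    push_cast [Complex.ofReal_cpow hx0.le, Complex.ofReal_cpow (sub_nonneg.2 hx1.le)]
    rfl
  rw [show betaFn p q = ProbabilityTheory.beta p q from rfl,
    ProbabilityTheory.beta_eq_betaIntegralReal p q hp hq, hB, Complex.ofReal_re]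

theorem image_cosh_Ioi {r : ℝ} (hr : 0 ≤ r) : cosh '' Ioi r = Ioi (cosh r) := by
  ext y
  constructor
  · rintro ⟨ρ, hρ, rfl⟩
    rw [mem_Ioi, cosh_lt_cosh, abs_of_nonneg hr, abs_of_pos (hr.trans_lt hρ)]
    exact hρ
  · intro hy
    have hy1 : 1 ≤ y := (one_le_cosh r).trans (le_of_lt hy)
    refine ⟨arcosh y, ?_, cosh_arcosh hy1⟩
    rw [mem_Ioi, ← cosh_arcosh hy1, cosh_lt_cosh, abs_of_nonneg hr,
      abs_of_nonneg (arcosh_nonneg hy1)] at hy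
    exact hy

theorem integral_Ioi_comp_cosh_mul_sinh {r : ℝ} (hr : 0 ≤ r) (g : ℝ → ℝ) :
    ∫ ρ in Ioi r, g (cosh ρ) * sinh ρ = ∫ t in Ioi (cosh r), g t := by
  rw [← image_cosh_Ioi hr, integral_image_eq_integral_abs_deriv_smul measurableSet_Ioi
    (fun ρ _ => (hasDerivAt_cosh ρ).hasDerivWithinAt) (cosh_injOn.mono (Ioi_subset_Ici hr))]
  refine setIntegral_congr_fun measurableSet_Ioi fun ρ hρ => ?_
  rw [smul_eq_mul, abs_of_pos (sinh_pos_iff.2 (hr.trans_lt hρ)), mul_comm]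

section MobiusSubstitution

variable {b c : ℝ}

theorem image_sub_div_sub_Ioi (hcb : c < b) :
    (fun t => (t - b) / (t - c)) '' Ioi b = Ioo 0 1 := by
  ext x
  constructor
  · rintro ⟨t, ht, rfl⟩
    have htc : 0 < t - c := by linarith [mem_Ioi.1 ht]
    exact ⟨div_pos (sub_pos.2 ht) htc, (div_lt_one htc).2 (by linarith)⟩
  · rintro ⟨hx0, hx1⟩
    have h1x : 0 < 1 - x := sub_pos.2 hx1
    refine ⟨(b - c * x) / (1 - x), ?_, ?_⟩
    · rw [mem_Ioi, lt_div_iff₀ h1x]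
      nlinarith
    · have hbc : b - c * x - c * (1 - x) ≠ 0 := by
        rw [show b - c * x - c * (1 - x) = b - c by ring]
        exact sub_ne_zero.2 hcb.ne'
      field_simp
      ring

theorem integral_Ioo_zero_one_eq_integral_Ioi_sub_div_sub (hcb : c < b) (g : ℝ → ℝ) :
    ∫ x in Ioo (0:ℝ) 1, g x = ∫ t in Ioi b, (b - c) / (t - c) ^ 2 * g ((t - b) / (t - c)) := by
  have hderiv : ∀ t ∈ Ioi b,
      HasDerivWithinAt (fun t => (t - b) / (t - c)) ((b - c) / (t - c) ^ 2) (Ioi b) t := by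
    intro t ht
    have htc : t - c ≠ 0 := by linarith [mem_Ioi.1 ht]
    refine (((hasDerivAt_id t).sub_const b).div ((hasDerivAt_id t).sub_const c) htc)
      |>.hasDerivWithinAt.congr_deriv ?_
    simp only [id]
    ring
  have hinj : InjOn (fun t => (t - b) / (t - c)) (Ioi b) := by
    intro s hs t ht hst
    have hsc : s - c ≠ 0 := by linarith [mem_Ioi.1 hs]
    have htc : t - c ≠ 0 := by linarith [mem_Ioi.1 ht]
    rw [div_eq_div_iff hsc htc] at hst
    have : (b - c) * (s - t) = 0 := by linear_combination hst
    linarith [(mul_eq_zero.1 this).resolve_left (by linarith)]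
  rw [← image_sub_div_sub_Ioi hcb, integral_image_eq_integral_abs_deriv_smul measurableSet_Ioi
    hderiv hinj]
  refine setIntegral_congr_fun measurableSet_Ioi fun t ht => ?_
  rw [smul_eq_mul, abs_of_pos (div_pos (sub_pos.2 hcb) (by nlinarith [mem_Ioi.1 ht]))]

theorem jacobian_mul_beta_integrand_sub_div_sub {t p q : ℝ} (hcb : c < b) (hbt : b < t) :
    (b - c) / (t - c) ^ 2 * (((t - b) / (t - c)) ^ (p - 1) * (1 - (t - b) / (t - c)) ^ (q - 1))
      = (b - c) ^ q * ((t - c) ^ (-(p + q)) * (t - b) ^ (p - 1)) := by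
  have hbc : 0 < b - c := sub_pos.2 hcb
  have htb : 0 < t - b := sub_pos.2 hbt
  have htc : 0 < t - c := by linarith
  have h1 : 1 - (t - b) / (t - c) = (b - c) / (t - c) := by field_simp; ring
  rw [h1, div_rpow htb.le htc.le, div_rpow hbc.le htc.le, rpow_sub_one htc.ne',
    rpow_sub_one htc.ne', rpow_sub_one hbc.ne', rpow_neg htc.le, rpow_add htc]
  have hp : 0 < (t - c) ^ p := rpow_pos_of_pos htc p
  have hq : 0 < (t - c) ^ q := rpow_pos_of_pos htc q
  field_simp

theorem integral_Ioi_sub_rpow_mul_sub_rpow {p q : ℝ} (hcb : c < b) (hp : 0 < p) (hq : 0 < q) :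
    ∫ t in Ioi b, (t - c) ^ (-(p + q)) * (t - b) ^ (p - 1) = (b - c) ^ (-q) * betaFn p q := by
  have hbc : 0 < b - c := sub_pos.2 hcb
  rw [← integral_Ioo_rpow_mul_one_sub_rpow hp hq,
    integral_Ioo_zero_one_eq_integral_Ioi_sub_div_sub hcb,
    setIntegral_congr_fun measurableSet_Ioi fun t ht =>
      jacobian_mul_beta_integrand_sub_div_sub hcb ht,
    integral_const_mul, rpow_neg hbc.le, inv_mul_cancel_left₀ (rpow_pos_of_pos hbc q).ne']

end MobiusSubstitution

theorem stmt_5_general (r c : ℝ) (hr : 0 < r) (hc : c < Real.cosh r) (n : ℕ) :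
    ∫ ρ in Ioi r,
        (Real.cosh ρ - c) ^ (-((n:ℝ) + 2) / 2) *
          (Real.cosh ρ - Real.cosh r) ^ (-(1:ℝ) / 2) * Real.sinh ρ
      = (Real.cosh r - c) ^ (-((n:ℝ) + 1) / 2) * betaFn (1/2) (((n:ℝ) + 1) / 2) := by
  have hbeta := integral_Ioi_sub_rpow_mul_sub_rpow hc (p := 1 / 2) (q := ((n:ℝ) + 1) / 2)
    one_half_pos (by positivity)
  rw [show -((1:ℝ) / 2 + ((n:ℝ) + 1) / 2) = -((n:ℝ) + 2) / 2 by ring,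
    show (1:ℝ) / 2 - 1 = -1 / 2 by norm_num, ← neg_div] at hbeta
  rw [← hbeta, ← integral_Ioi_comp_cosh_mul_sinh hr.le]

theorem stmt_5 (r c : ℝ) (hr : 0 < r) (hc : c < Real.cosh r) (n : ℕ) (hn : 1 ≤ n) :
    ∫ ρ in Ioi r,
        (Real.cosh ρ - c) ^ (-((n:ℝ) + 2) / 2) *
          (Real.cosh ρ - Real.cosh r) ^ (-(1:ℝ) / 2) * Real.sinh ρ
      = (Real.cosh r - c) ^ (-((n:ℝ) + 1) / 2) * betaFn (1/2) (((n:ℝ) + 1) / 2) :=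
  stmt_5_general r c hr hc n
end

section
/- For every y > 0 and λ > 0, e^{−yλ}/y = (1/√π)·∫_0^∞ e^{−u·y²}·u^{−1/2}·e^{−λ²/(4u)} du. -/
/-!
Substituting `u = t ^ 2` and completing the square,
`u y² + λ² / (4u) = (y t - λ / (2t))² + y λ`, turns the integral into
`2 e^{-yλ} ∫₀^∞ exp (-(y t - b / t) ²) dt` with `b = λ / 2`. This is the Cauchy–Schlömilch
integral: `t ↦ a t - b / t` maps `(0, ∞)` bijectively onto `ℝ` with derivative `a + b / t²`, and the
inversion `t ↦ b / (a t)` shows that the two parts of this weight contribute equally, so for an even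
integrable `g` one gets `∫₀^∞ g (a t - b / t) dt = (2a)⁻¹ ∫ g`. For the Gaussian this is `√π / (2a)`.
-/

open Real Set MeasureTheory

theorem hasDerivAt_mul_sub_div (a b : ℝ) {t : ℝ} (ht : t ≠ 0) :
    HasDerivAt (fun t => a * t - b / t) (a + b / t ^ 2) t := by
  have h := ((hasDerivAt_id' t).const_mul a).sub ((hasDerivAt_inv ht).const_mul b)
  simpa only [Pi.sub_def, mul_one, mul_neg, sub_neg_eq_add, ← div_eq_mul_inv] using h

theorem strictMonoOn_mul_sub_div {a b : ℝ} (ha : 0 < a) (hb : 0 ≤ b) :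
    StrictMonoOn (fun t => a * t - b / t) (Ioi 0) := fun s (hs : 0 < s) t _ hst => by
  linarith [mul_lt_mul_of_pos_left hst ha, div_le_div_of_nonneg_left hb hs hst.le]

theorem image_mul_sub_div_Ioi {a b : ℝ} (ha : 0 < a) (hb : 0 < b) :
    (fun t => a * t - b / t) '' Ioi 0 = univ := by
  refine eq_univ_of_forall fun x => ?_
  -- the positive root of `a t² - x t - b = 0`
  set r := √(x ^ 2 + 4 * a * b)
  have hr : r ^ 2 = x ^ 2 + 4 * a * b := sq_sqrt (by positivity)
  have hxr : 0 < x + r := by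
    have : |x| < r := abs_lt_of_sq_lt_sq (by nlinarith) (sqrt_nonneg _)
    linarith [neg_abs_le x]
  refine ⟨(x + r) / (2 * a), div_pos hxr (by positivity), ?_⟩
  field_simp
  nlinarith

section CauchySchlomilch

variable {E : Type*} [NormedAddCommGroup E] [NormedSpace ℝ E]

theorem integral_Ioi_smul_comp_div {c : ℝ} (hc : 0 < c) (f : ℝ → E) :
    ∫ t in Ioi 0, (c / t ^ 2) • f (c / t) = ∫ t in Ioi 0, f t := by
  have h := integral_comp_rpow_Ioi (fun s => f (c * s)) (p := -1) (by norm_num)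
  rw [integral_comp_mul_left_Ioi f 0 hc, mul_zero] at h
  rw [← smul_inv_smul₀ hc.ne' (∫ t in Ioi 0, f t), ← h, ← integral_smul]
  refine setIntegral_congr_fun measurableSet_Ioi fun t (ht : 0 < t) => ?_
  simp only [smul_smul]
  congr 2
  · norm_num [rpow_neg ht.le, rpow_two]; ring
  · rw [rpow_neg_one, div_eq_mul_inv]

theorem integral_Ioi_smul_comp_mul_sub_div {a b : ℝ} (ha : 0 < a) (hb : 0 < b) (g : ℝ → E) :
    ∫ t in Ioi 0, (a + b / t ^ 2) • g (a * t - b / t) = ∫ x, g x := by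
  have h := integral_image_eq_integral_abs_deriv_smul measurableSet_Ioi
    (fun t (ht : 0 < t) => (hasDerivAt_mul_sub_div a b ht.ne').hasDerivWithinAt)
    (strictMonoOn_mul_sub_div ha hb.le).injOn g
  rw [image_mul_sub_div_Ioi ha hb, Measure.restrict_univ] at h
  rw [h]
  refine setIntegral_congr_fun measurableSet_Ioi fun t (ht : 0 < t) => ?_
  rw [abs_of_pos (by positivity)]

theorem integrableOn_Ioi_smul_comp_mul_sub_div_iff {a b : ℝ} (ha : 0 < a) (hb : 0 < b)
    (g : ℝ → E) :
    IntegrableOn (fun t => (a + b / t ^ 2) • g (a * t - b / t)) (Ioi 0) ↔ Integrable g := by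
  have h := integrableOn_image_iff_integrableOn_abs_deriv_smul measurableSet_Ioi
    (fun t (ht : 0 < t) => (hasDerivAt_mul_sub_div a b ht.ne').hasDerivWithinAt)
    (strictMonoOn_mul_sub_div ha hb.le).injOn g
  rw [image_mul_sub_div_Ioi ha hb, integrableOn_univ] at h
  rw [h]
  refine integrableOn_congr_fun (fun t (ht : 0 < t) => ?_) measurableSet_Ioi
  rw [abs_of_pos (by positivity)]

theorem integral_Ioi_comp_mul_sub_div_of_even {a b : ℝ} (ha : 0 < a) (hb : 0 < b) {g : ℝ → E}
    (hg : Integrable g) (hg_even : ∀ x, g (-x) = g x) :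
    ∫ t in Ioi 0, g (a * t - b / t) = (2 * a)⁻¹ • ∫ x, g x := by
  set F := fun t => g (a * t - b / t)
  -- `t ↦ (b / a) / t` maps `Ioi 0` onto itself and sends `a * t - b / t` to its negative
  have hreflect : ∫ t in Ioi 0, (b / t ^ 2) • F t = a • ∫ t in Ioi 0, F t := by
    rw [← integral_Ioi_smul_comp_div (div_pos hb ha) F, ← integral_smul]
    refine setIntegral_congr_fun measurableSet_Ioi fun t (ht : 0 < t) => ?_
    have harg : a * (b / a / t) - b / (b / a / t) = -(a * t - b / t) := by
      field_simp; ring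
    simp only [F, harg, hg_even, smul_smul]
    congr 1
    field_simp
  have hsum_int : IntegrableOn (fun t => (a + b / t ^ 2) • F t) (Ioi 0) :=
    (integrableOn_Ioi_smul_comp_mul_sub_div_iff ha hb g).2 hg
  have hF_int : IntegrableOn F (Ioi 0) := by
    have hweight : ContinuousOn (fun t : ℝ => (a + b / t ^ 2)⁻¹) (Ioi 0) :=
      fun t (ht : 0 < t) => by fun_prop (disch := positivity)
    refine IntegrableOn.congr_fun
      (hsum_int.bdd_smul a⁻¹ (hweight.aestronglyMeasurable measurableSet_Ioi) ?_)
      (fun t (ht : 0 < t) => ?_) measurableSet_Ioi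
    · filter_upwards [ae_restrict_mem measurableSet_Ioi] with t (ht : 0 < t)
      rw [norm_inv, norm_of_nonneg (by positivity)]
      exact inv_anti₀ ha (le_add_of_nonneg_right (by positivity))
    · simp only [Pi.smul_apply', smul_smul]
      rw [inv_mul_cancel₀ (by positivity), one_smul]
  have hb_int : IntegrableOn (fun t => (b / t ^ 2) • F t) (Ioi 0) :=
    (hsum_int.sub (hF_int.smul a)).congr_fun (fun t _ => by
      simp only [Pi.sub_apply, Pi.smul_apply, add_smul, add_sub_cancel_left])
      measurableSet_Ioi
  have h2a : (2 * a) • ∫ t in Ioi 0, F t = ∫ x, g x := by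
    calc (2 * a) • ∫ t in Ioi 0, F t
        = ∫ t in Ioi 0, a • F t + (b / t ^ 2) • F t := by
          rw [integral_add (f := fun t => a • F t) (hF_int.smul a) hb_int, integral_smul, hreflect,
            two_mul, add_smul]
      _ = ∫ x, g x := by
          simp only [← add_smul]
          exact integral_Ioi_smul_comp_mul_sub_div ha hb g
  rw [← h2a, inv_smul_smul₀ (by positivity)]

end CauchySchlomilch

theorem integral_Ioi_exp_neg_sq_mul_sub_div {a b : ℝ} (ha : 0 < a) (hb : 0 < b) :
    ∫ t in Ioi 0, exp (-(a * t - b / t) ^ 2) = √π / (2 * a) := by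
  have hgauss := integral_gaussian 1
  simp only [neg_one_mul, div_one] at hgauss
  rw [integral_Ioi_comp_mul_sub_div_of_even ha hb (g := fun x => exp (-x ^ 2))
    (by simpa using integrable_exp_neg_mul_sq one_pos) (fun x => by rw [neg_sq]),
    hgauss, smul_eq_mul, inv_mul_eq_div]

theorem stmt_7 (y lam : ℝ) (hy : 0 < y) (hlam : 0 < lam) :
    Real.exp (-y * lam) / y
      = (1 / Real.sqrt π) *
        ∫ u in Ioi (0:ℝ), Real.exp (-u * y ^ 2) * u ^ (-(1:ℝ) / 2) * Real.exp (-lam ^ 2 / (4 * u)) := by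
  have hsq : ∀ t : ℝ, 0 < t → (2 * t ^ ((2:ℝ) - 1)) • (exp (-t ^ (2:ℝ) * y ^ 2) *
      (t ^ (2:ℝ)) ^ (-(1:ℝ) / 2) * exp (-lam ^ 2 / (4 * t ^ (2:ℝ))))
      = 2 * exp (-y * lam) * exp (-(y * t - lam / 2 / t) ^ 2) := by
    intro t ht
    have hroot : (t ^ (2:ℝ)) ^ (-(1:ℝ) / 2) = t⁻¹ := by
      rw [← rpow_mul ht.le]; norm_num [rpow_neg_one]
    have hexp : exp (-t ^ 2 * y ^ 2) * exp (-lam ^ 2 / (4 * t ^ 2))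
        = exp (-y * lam) * exp (-(y * t - lam / 2 / t) ^ 2) := by
      rw [← exp_add, ← exp_add]
      congr 1
      field_simp
      ring
    rw [hroot, rpow_two, show (2:ℝ) - 1 = 1 by norm_num, rpow_one, smul_eq_mul]
    calc 2 * t * (exp (-t ^ 2 * y ^ 2) * t⁻¹ * exp (-lam ^ 2 / (4 * t ^ 2)))
        = 2 * (t * t⁻¹) * (exp (-t ^ 2 * y ^ 2) * exp (-lam ^ 2 / (4 * t ^ 2))) := by ring
      _ = 2 * exp (-y * lam) * exp (-(y * t - lam / 2 / t) ^ 2) := by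
        rw [mul_inv_cancel₀ ht.ne', hexp, mul_one, mul_assoc]
  rw [← integral_comp_rpow_Ioi_of_pos two_pos, setIntegral_congr_fun measurableSet_Ioi hsq,
    integral_const_mul, integral_Ioi_exp_neg_sq_mul_sub_div hy (half_pos hlam)]
  field_simp
end
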